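/- Distributional zero-temperature limit of the Concrete relaxation: if ν ~ Uniform[0,1] and α ∈ (0,1), then as δ → 0⁺ the random variables γ̃_δ = sigmoid((logit(α) − logit(ν))/δ) converge in distribution to Bernoulli(α). -/

import Mathlib

open MeasureTheory Filter

noncomputable def logit (x : ℝ) : ℝ := Real.log (x / (1 - x))

noncomputable def sigmoid (x : ℝ) : ℝ := 1 / (1 + Real.exp (-x))

/-!
For `0 < t < 1` write `t = sigmoid c`. For `ν ∈ (0, 1)` and `δ > 0`, monotonicity of `sigmoid`
and `ν = sigmoid (logit ν)` turn the event `sigmoid ((logit α - logit ν) / δ) ≤ t` into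
`ν ≥ sigmoid (logit α - δ c)`, whose uniform probability `1 - sigmoid (logit α - δ c)` tends to
`1 - sigmoid (logit α) = 1 - α` as `δ → 0⁺`. For `t < 0` the event is empty and for `t ≥ 1` it is
everything, since `sigmoid` takes values in `(0, 1)`.
-/

open Set

lemma sigmoid_eq_real_sigmoid : sigmoid = Real.sigmoid :=
  funext fun _ => one_div _

lemma sigmoid_pos (x : ℝ) : 0 < sigmoid x :=
  sigmoid_eq_real_sigmoid ▸ Real.sigmoid_pos x

lemma sigmoid_lt_one (x : ℝ) : sigmoid x < 1 :=
  sigmoid_eq_real_sigmoid ▸ Real.sigmoid_lt_one x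

lemma sigmoid_le_sigmoid_iff {a b : ℝ} : sigmoid a ≤ sigmoid b ↔ a ≤ b :=
  sigmoid_eq_real_sigmoid ▸ Real.sigmoid_le_iff

lemma continuous_sigmoid' : Continuous sigmoid :=
  sigmoid_eq_real_sigmoid ▸ continuous_sigmoid

lemma measurable_logit : Measurable logit :=
  Real.measurable_log.comp (measurable_id.div (measurable_const.sub measurable_id))

lemma sigmoid_logit {x : ℝ} (hx : x ∈ Ioo (0 : ℝ) 1) : sigmoid (logit x) = x := by
  obtain ⟨hx0, hx1⟩ := hx
  have h1x : 1 - x ≠ 0 := by linarith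
  rw [sigmoid, logit, Real.exp_neg, Real.exp_log (div_pos hx0 (by linarith)), inv_div]
  field_simp
  ring

lemma setOf_sigmoid_div_le_inter_Ioo_eq_Ico (a c : ℝ) {δ : ℝ} (hδ : 0 < δ) :
    {ν : ℝ | sigmoid ((a - logit ν) / δ) ≤ sigmoid c} ∩ Ioo 0 1
      = Ico (sigmoid (a - δ * c)) 1 := by
  ext ν
  simp only [mem_inter_iff, mem_ofPred_eq, mem_Ioo, mem_Ico, sigmoid_le_sigmoid_iff,
    div_le_iff₀ hδ]
  constructor
  · rintro ⟨hle, hν0, hν1⟩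
    refine ⟨?_, hν1⟩
    calc sigmoid (a - δ * c) ≤ sigmoid (logit ν) := sigmoid_le_sigmoid_iff.2 (by linarith)
      _ = ν := sigmoid_logit ⟨hν0, hν1⟩
  · rintro ⟨hle, hν1⟩
    have hν0 : 0 < ν := (sigmoid_pos _).trans_le hle
    have := sigmoid_le_sigmoid_iff.1 (hle.trans_eq (sigmoid_logit ⟨hν0, hν1⟩).symm)
    exact ⟨by linarith, hν0, hν1⟩

lemma uniform_measure_sigmoid_div_le (a c : ℝ) {δ : ℝ} (hδ : 0 < δ) :
    ((volume.restrict (Icc (0 : ℝ) 1))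
      {ν : ℝ | sigmoid ((a - logit ν) / δ) ≤ sigmoid c}).toReal = 1 - sigmoid (a - δ * c) := by
  have hmeas : MeasurableSet {ν : ℝ | sigmoid ((a - logit ν) / δ) ≤ sigmoid c} :=
    measurableSet_le
      (continuous_sigmoid'.measurable.comp ((measurable_const.sub measurable_logit).div_const δ))
      measurable_const
  rw [← restrict_Ioo_eq_restrict_Icc, Measure.restrict_apply hmeas,
    setOf_sigmoid_div_le_inter_Ioo_eq_Ico a c hδ, Real.volume_Ico,
    ENNReal.toReal_ofReal (by linarith [sigmoid_lt_one (a - δ * c)])]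

lemma tendsto_sigmoid_logit_sub_mul {α : ℝ} (hα : α ∈ Ioo (0 : ℝ) 1) (c : ℝ) :
    Tendsto (fun δ => sigmoid (logit α - δ * c)) (nhdsWithin 0 (Ioi 0)) (nhds α) := by
  have hcont : Continuous fun δ => sigmoid (logit α - δ * c) :=
    continuous_sigmoid'.comp (by fun_prop)
  simpa [sigmoid_logit hα] using (hcont.tendsto 0).mono_left nhdsWithin_le_nhds

/-- Distributional zero-temperature limit of the Concrete relaxation: the CDF
of `sigmoid((logit α − logit ν)/δ)`, with `ν ~ Uniform[0,1]`, converges as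
`δ → 0⁺` to the `Bernoulli(α)` CDF at every continuity point `t ∉ {0,1}`. -/
theorem concrete_zero_temperature_in_distribution (α : ℝ)
    (hα : α ∈ Set.Ioo (0 : ℝ) 1) :
    ∀ t : ℝ, t ≠ 0 → t ≠ 1 →
      Tendsto (fun δ : ℝ =>
          ((volume.restrict (Set.Icc (0 : ℝ) 1))
            {ν : ℝ | sigmoid ((logit α - logit ν) / δ) ≤ t}).toReal)
        (nhdsWithin 0 (Set.Ioi 0))
        (nhds (if t < 0 then 0 else if t < 1 then 1 - α else 1)) := by
  intro t ht0 _
  rcases ht0.lt_or_gt with ht_neg | ht_pos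
  · have hempty (δ : ℝ) : {ν : ℝ | sigmoid ((logit α - logit ν) / δ) ≤ t} = ∅ :=
      eq_empty_of_forall_notMem fun _ hν => (ht_neg.trans (sigmoid_pos _)).not_ge hν
    simp [ht_neg, hempty]
  rcases lt_or_ge t 1 with ht1 | ht1
  · obtain ⟨c, rfl⟩ : ∃ c, sigmoid c = t := ⟨logit t, sigmoid_logit ⟨ht_pos, ht1⟩⟩
    simp only [ht_pos.not_gt, ht1, if_false, if_true]
    refine (tendsto_const_nhds.sub (tendsto_sigmoid_logit_sub_mul hα c)).congr' ?_
    filter_upwards [self_mem_nhdsWithin] with δ hδ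
    exact (uniform_measure_sigmoid_div_le _ c hδ).symm
  · have huniv (δ : ℝ) : {ν : ℝ | sigmoid ((logit α - logit ν) / δ) ≤ t} = univ :=
      eq_univ_of_forall fun _ => ((sigmoid_lt_one _).trans_le ht1).le
    simp [ht_pos.not_gt, ht1.not_gt, huniv]
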